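/- arXiv:2304.01465 — 2 statements merged into one kernel-verified Lean document; each statement's English description precedes it below -/
import Mathlib

section
/- Let p ≥ 1, K ≥ 1, z ∈ 𝔻, and 0 < ε < 1 - |z|. Let f be a harmonic K-quasiregular mapping of 𝔻 into ℂ. Then there is a constant M depending only on p and K (one may take M = 4^{p+1} K^p) such that 𝓜_f(z)^p ≤ (M/ε^{p+2}) · ∫_{𝔻(z,ε)} max(|f(w)| - |f(z)|, 0)^p dm(w), where dm is Lebesgue area measure divided by π. -/
/-!
Rotating `f = h + conj g` by a unimodular constant gives a holomorphic `ψ` with `ψ z = 0`,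
`Re ψ w ≤ |f w| - |f z|` and `𝓜_f(z) ≤ K (|h'(z)| - |g'(z)|) ≤ K |ψ'(z)|`. On the circle
`w = z + r e^{iθ}` the Cauchy formula gives `⨍ Re ψ · (1 + cos (θ + arg ψ'(z))) = r |ψ'(z)| / 2`.
The weight has mean one and lies in `[0, 2]`, so Jensen's inequality for the probability density
it defines bounds `(r |ψ'(z)|) ^ p` by `2 ^ (p + 1)` times the circle mean of `(Re ψ)⁺ ^ p`.
Integrating over `0 < r < ε` in polar coordinates yields the constant `(p + 2) 2 ^ p ≤ 4 ^ (p + 1)`.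
-/

open Metric ComplexConjugate Real MeasureTheory Set Topology

theorem Real.rpow_add_mul_rpow_sub_one_mul_sub_le {p a b : ℝ} (hp : 1 ≤ p) (ha : 0 < a)
    (hb : 0 ≤ b) : a ^ p + p * a ^ (p - 1) * (b - a) ≤ b ^ p := by
  have hB := one_add_mul_self_le_rpow_one_add (s := b / a - 1) (by simp; positivity) hp
  rw [add_sub_cancel, div_rpow hb ha.le, le_div_iff₀ (by positivity)] at hB
  calc a ^ p + p * a ^ (p - 1) * (b - a) = (1 + p * (b / a - 1)) * a ^ p := by
        rw [rpow_sub_one ha.ne']; field_simp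
    _ ≤ b ^ p := hB

theorem rpow_integral_mul_le_integral_rpow_mul {α : Type*} [MeasurableSpace α] {μ : Measure α}
    {p : ℝ} (hp : 1 ≤ p) {a W : α → ℝ} (ha : 0 ≤ a) (hW : 0 ≤ W)
    (hWi : Integrable W μ) (haW : Integrable (fun x ↦ W x * a x) μ)
    (hapW : Integrable (fun x ↦ W x * a x ^ p) μ) (hW1 : ∫ x, W x ∂μ = 1) :
    (∫ x, W x * a x ∂μ) ^ p ≤ ∫ x, W x * a x ^ p ∂μ := by
  set A := ∫ x, W x * a x ∂μ with hA_def
  rcases (integral_nonneg fun x ↦ mul_nonneg (hW x) (ha x) : 0 ≤ A).eq_or_lt with hA | hA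
  · rw [hA_def, ← hA, zero_rpow (by linarith)]
    exact integral_nonneg fun x ↦ mul_nonneg (hW x) (rpow_nonneg (ha x) p)
  -- integrate the tangent line of `x ↦ x ^ p` at the barycentre `A`
  have hsplit : ∀ x, W x * (A ^ p + p * A ^ (p - 1) * (a x - A)) =
      (A ^ p - p * A ^ (p - 1) * A) * W x + p * A ^ (p - 1) * (W x * a x) := fun x ↦ by ring
  calc A ^ p = ∫ x, W x * (A ^ p + p * A ^ (p - 1) * (a x - A)) ∂μ := by
        simp_rw [hsplit]
        rw [integral_add (hWi.const_mul _) (haW.const_mul _), integral_const_mul,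
          integral_const_mul, hW1, ← hA_def]
        ring
    _ ≤ ∫ x, W x * a x ^ p ∂μ := by
        refine integral_mono ?_ hapW fun x ↦ ?_
        · simp_rw [hsplit]
          exact (hWi.const_mul _).add (haW.const_mul _)
        · exact mul_le_mul_of_nonneg_left (rpow_add_mul_rpow_sub_one_mul_sub_le hp hA (ha x))
            (hW x)

theorem integral_max_rpow_mono {α : Type*} [MeasurableSpace α] {μ : Measure α} {p : ℝ}
    (hp : 0 ≤ p) {u v : α → ℝ} (hv : Integrable (fun x ↦ max (v x) 0 ^ p) μ)
    (huv : ∀ x, u x ≤ v x) :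
    ∫ x, max (u x) 0 ^ p ∂μ ≤ ∫ x, max (v x) 0 ^ p ∂μ :=
  integral_mono_of_nonneg (ae_of_all _ fun x ↦ by positivity) hv
    (ae_of_all _ fun x ↦ rpow_le_rpow (le_max_right _ _) (max_le_max (huv x) le_rfl) hp)

namespace Real

theorem circleAverage_eq_setIntegral (f : ℂ → ℝ) (c : ℂ) (R : ℝ) :
    circleAverage f c R = ∫ θ in Ioc 0 (2 * π), (2 * π)⁻¹ * f (circleMap c R θ) := by
  rw [circleAverage_def, smul_eq_mul, intervalIntegral.integral_of_le two_pi_pos.le,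
    integral_const_mul]

theorem rpow_circleAverage_mul_le {p : ℝ} (hp : 1 ≤ p) {a W : ℂ → ℝ} {c : ℂ} {R : ℝ}
    (ha : ∀ w ∈ sphere c |R|, 0 ≤ a w) (hW : ∀ w ∈ sphere c |R|, 0 ≤ W w)
    (hac : ContinuousOn a (sphere c |R|)) (hWc : ContinuousOn W (sphere c |R|))
    (hW1 : circleAverage W c R = 1) :
    circleAverage (fun w ↦ W w * a w) c R ^ p ≤ circleAverage (fun w ↦ W w * a w ^ p) c R := by
  have hac' : Continuous fun θ ↦ a (circleMap c R θ) :=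
    hac.comp_continuous (continuous_circleMap c R) (circleMap_mem_sphere' c R)
  have hWc' : Continuous fun θ ↦ (2 * π)⁻¹ * W (circleMap c R θ) :=
    continuous_const.mul
      (hWc.comp_continuous (continuous_circleMap c R) (circleMap_mem_sphere' c R))
  have hapc := hac'.rpow_const fun θ ↦ .inr (zero_le_one.trans hp)
  simp only [circleAverage_eq_setIntegral, ← mul_assoc] at hW1 ⊢
  exact rpow_integral_mul_le_integral_rpow_mul hp
    (fun θ ↦ ha _ (circleMap_mem_sphere' c R θ))
    (fun θ ↦ mul_nonneg (by positivity) (hW _ (circleMap_mem_sphere' c R θ)))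
    hWc'.integrableOn_Ioc (hWc'.mul hac').integrableOn_Ioc (hWc'.mul hapc).integrableOn_Ioc hW1

theorem circleAverage_re {f : ℂ → ℂ} {c : ℂ} {R : ℝ} (hf : CircleIntegrable f c R) :
    circleAverage (fun w ↦ (f w).re) c R = (circleAverage f c R).re :=
  Complex.reCLM.circleAverage_comp_comm hf

theorem continuousOn_inv_sub_sphere {c : ℂ} {R : ℝ} (hR : R ≠ 0) :
    ContinuousOn (fun w ↦ (w - c)⁻¹) (sphere c |R|) :=
  (continuousOn_id.sub continuousOn_const).inv₀ fun _ hw ↦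
    sub_ne_zero.2 (ne_of_mem_sphere hw (abs_ne_zero.2 hR))

theorem circleAverage_inv_sub_center (c : ℂ) (R : ℝ) :
    circleAverage (fun w ↦ (w - c)⁻¹) c R = 0 := by
  rcases eq_or_ne R 0 with rfl | hR
  · simp
  rw [circleAverage_eq_circleIntegral hR]
  have : ∀ w : ℂ, (w - c)⁻¹ • (w - c)⁻¹ = (w - c) ^ (-2 : ℤ) := fun w ↦ by
    rw [smul_eq_mul, zpow_neg, ← mul_inv, zpow_two]
  simp_rw [this, circleIntegral.integral_sub_zpow_of_ne (by norm_num : (-2 : ℤ) ≠ -1), smul_zero]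

theorem circleAverage_one_add_re_mul_inv_sub {c : ℂ} {R : ℝ} (hR : R ≠ 0) (v : ℂ) :
    circleAverage (fun w ↦ 1 + (v * (w - c)⁻¹).re) c R = 1 := by
  have hinv := continuousOn_inv_sub_sphere (c := c) hR
  have hint : ContinuousOn (fun w ↦ v * (w - c)⁻¹) (sphere c |R|) := by fun_prop
  have hre : CircleIntegrable (fun w ↦ (v * (w - c)⁻¹).re) c R :=
    (Complex.continuous_re.comp_continuousOn hint).circleIntegrable'
  rw [circleAverage_fun_add continuousOn_const.circleIntegrable' hre, circleAverage_const,
    circleAverage_re hint.circleIntegrable',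
    show (fun w ↦ v * (w - c)⁻¹) = fun w ↦ v • (w - c)⁻¹ from rfl, circleAverage_fun_smul,
    circleAverage_inv_sub_center]
  simp

section

variable {F : ℂ → ℂ} {c : ℂ} {R : ℝ}

theorem circleAverage_re_mul_inv_sub (hR : 0 < R) (hF : DiffContOnCl ℂ F (ball c R))
    (hc : F c = 0) :
    circleAverage (fun w ↦ ((F w).re : ℂ) * (w - c)⁻¹) c R = deriv F c / 2 := by
  have hball : ball c |R| = ball c R := by rw [abs_of_pos hR]
  -- on the circle `(w - c)⁻¹ = conj (w - c) / R ^ 2`, so `Re F` contributes half of `F / (w - c)`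
  -- and half of the conjugate of `(w - c) * F w`, whose average vanishes
  have hsphere : ∀ w ∈ sphere c |R|, ((F w).re : ℂ) * (w - c)⁻¹ =
      (1 / 2 : ℂ) • dslope F c w + ((1 / 2 : ℂ) * ((R : ℂ) ^ 2)⁻¹) • conj ((w - c) * F w) := by
    intro w hw
    have hwc : w - c ≠ 0 := sub_ne_zero.2 (ne_of_mem_sphere hw (by positivity))
    have hwc' : conj (w - c) ≠ 0 := (map_ne_zero _).2 hwc
    have hnorm : conj (w - c) * (w - c) = (R : ℂ) ^ 2 := by
      rw [mul_comm, Complex.mul_conj, Complex.normSq_eq_norm_sq, ← dist_eq_norm,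
        mem_sphere.1 hw, abs_of_pos hR]
      norm_cast
    rw [dslope_of_ne _ (sub_ne_zero.1 hwc), slope_def_field, hc, sub_zero, ← hnorm,
      Complex.re_eq_add_conj, map_mul, smul_eq_mul, smul_eq_mul]
    field_simp
  have hdslope : DiffContOnCl ℂ (dslope F c) (ball c R) := by
    refine ⟨(Complex.differentiableOn_dslope (ball_mem_nhds c hR)).2 hF.1, ?_⟩
    rw [closure_ball c hR.ne']
    exact (continuousOn_dslope (closedBall_mem_nhds c hR)).2
      ⟨hF.continuousOn_ball, hF.differentiableAt isOpen_ball (mem_ball_self hR)⟩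
  have hmul : DiffContOnCl ℂ (fun w ↦ (w - c) * F w) (ball c R) :=
    (differentiable_id.sub_const c).diffContOnCl.smul hF
  have hint {G : ℂ → ℂ} (hG : ContinuousOn G (closedBall c R)) : CircleIntegrable G c R :=
    hG.mono sphere_subset_closedBall |>.circleIntegrable hR.le
  have hdslope_cont := hdslope.continuousOn_ball
  have hmul_cont := hmul.continuousOn_ball
  have hconj : circleAverage (fun w ↦ conj ((w - c) * F w)) c R =
      conj (circleAverage (fun w ↦ (w - c) * F w) c R) :=
    Complex.conjCLE.toContinuousLinearMap.circleAverage_comp_comm (hint hmul_cont)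
  rw [← hball] at hdslope hmul
  rw [circleAverage_congr_sphere hsphere, circleAverage_fun_add (hint (by fun_prop))
    (hint (by fun_prop)), circleAverage_fun_smul, circleAverage_fun_smul, hconj,
    hdslope.circleAverage, hmul.circleAverage, dslope_same]
  simp [div_eq_inv_mul]

theorem circleAverage_one_add_re_mul_inv_sub_mul_re (hR : 0 < R)
    (hF : DiffContOnCl ℂ F (ball c R)) (hc : F c = 0) (v : ℂ) :
    circleAverage (fun w ↦ (1 + (v * (w - c)⁻¹).re) * (F w).re) c R = (v * deriv F c).re / 2 := by
  have hFc : ContinuousOn F (sphere c |R|) :=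
    hF.continuousOn_ball.mono (by rw [abs_of_pos hR]; exact sphere_subset_closedBall)
  have hinv := continuousOn_inv_sub_sphere (c := c) hR.ne'
  have hG : ContinuousOn (fun w ↦ v • (((F w).re : ℂ) * (w - c)⁻¹)) (sphere c |R|) := by
    fun_prop
  have hsplit : ∀ w, (1 + (v * (w - c)⁻¹).re) * (F w).re =
      (F w).re + (v • (((F w).re : ℂ) * (w - c)⁻¹)).re := fun w ↦ by
    rw [smul_eq_mul, show v * ((F w).re * (w - c)⁻¹) = v * (w - c)⁻¹ * (F w).re by ring,
      Complex.re_mul_ofReal]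
    ring
  have hreF : CircleIntegrable (fun w ↦ (F w).re) c R :=
    (Complex.continuous_re.comp_continuousOn hFc).circleIntegrable'
  have hreG : CircleIntegrable (fun w ↦ (v • (((F w).re : ℂ) * (w - c)⁻¹)).re) c R :=
    (Complex.continuous_re.comp_continuousOn hG).circleIntegrable'
  simp_rw [hsplit]
  rw [circleAverage_fun_add hreF hreG,
    circleAverage_re hFc.circleIntegrable', circleAverage_re hG.circleIntegrable',
    circleAverage_fun_smul, circleAverage_re_mul_inv_sub hR hF hc,
    (by rwa [abs_of_pos hR] : DiffContOnCl ℂ F (ball c |R|)).circleAverage, hc, smul_eq_mul]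
  rw [Complex.zero_re, zero_add, mul_div_assoc', Complex.div_ofNat_re]

theorem rpow_mul_norm_deriv_le_circleAverage {p : ℝ} (hp : 1 ≤ p) (hR : 0 < R)
    (hF : DiffContOnCl ℂ F (ball c R)) (hc : F c = 0) :
    (R * ‖deriv F c‖) ^ p ≤ 2 ^ (p + 1) * circleAverage (fun w ↦ max (F w).re 0 ^ p) c R := by
  obtain ⟨u, hu, hud⟩ := Complex.exists_norm_eq_mul_self (deriv F c)
  have hFc : ContinuousOn F (sphere c |R|) :=
    hF.continuousOn_ball.mono (by rw [abs_of_pos hR]; exact sphere_subset_closedBall)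
  -- on the circle `w = c + R e^{iθ}`, `W w = 1 + cos (θ + arg (deriv F c))`
  set W : ℂ → ℝ := fun w ↦ 1 + (u * R * (w - c)⁻¹).re
  have hWc : ContinuousOn W (sphere c |R|) :=
    continuousOn_const.add (Complex.continuous_re.comp_continuousOn
      (continuousOn_const.mul (continuousOn_inv_sub_sphere hR.ne')))
  have hW_bound : ∀ w ∈ sphere c |R|, 0 ≤ W w ∧ W w ≤ 2 := by
    intro w hw
    have hnorm : ‖u * R * (w - c)⁻¹‖ = 1 := by
      rw [norm_mul, norm_mul, hu, norm_inv, ← dist_eq_norm, mem_sphere.1 hw, Complex.norm_real,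
        Real.norm_eq_abs]
      field_simp [hR.ne']
    have := abs_le.1 (hnorm ▸ Complex.abs_re_le_norm (u * R * (w - c)⁻¹))
    constructor <;> simp only [W] <;> linarith
  have hWF : circleAverage (fun w ↦ W w * (F w).re) c R = R * ‖deriv F c‖ / 2 := by
    rw [circleAverage_one_add_re_mul_inv_sub_mul_re hR hF hc, mul_right_comm, ← hud,
      ← Complex.ofReal_mul, Complex.ofReal_re]
    ring
  set a : ℂ → ℝ := fun w ↦ max (F w).re 0
  have hac : ContinuousOn a (sphere c |R|) :=
    (Complex.continuous_re.comp_continuousOn hFc).sup continuousOn_const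
  have hapc : ContinuousOn (fun w ↦ a w ^ p) (sphere c |R|) :=
    hac.rpow_const fun w _ ↦ .inr (zero_le_one.trans hp)
  have hWF_le : R * ‖deriv F c‖ / 2 ≤ circleAverage (fun w ↦ W w * a w) c R := by
    rw [← hWF]
    refine circleAverage_mono
      (hWc.mul (Complex.continuous_re.comp_continuousOn hFc)).circleIntegrable'
      (hWc.mul hac).circleIntegrable' fun w hw ↦ ?_
    exact mul_le_mul_of_nonneg_left (le_max_left _ _) (hW_bound w hw).1
  calc (R * ‖deriv F c‖) ^ p = 2 ^ p * (R * ‖deriv F c‖ / 2) ^ p := by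
        rw [div_rpow (by positivity) zero_le_two]
        field_simp
    _ ≤ 2 ^ p * circleAverage (fun w ↦ W w * a w) c R ^ p := by gcongr
    _ ≤ 2 ^ p * circleAverage (fun w ↦ W w * a w ^ p) c R := by
        gcongr
        exact rpow_circleAverage_mul_le hp (fun w _ ↦ le_max_right _ _)
          (fun w hw ↦ (hW_bound w hw).1) hac hWc
          (circleAverage_one_add_re_mul_inv_sub hR.ne' _)
    _ ≤ 2 ^ p * circleAverage (fun w ↦ (2 : ℝ) • a w ^ p) c R := by
        refine mul_le_mul_of_nonneg_left (circleAverage_mono (hWc.mul hapc).circleIntegrable'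
          (hapc.const_smul (2 : ℝ)).circleIntegrable' fun w hw ↦ ?_) (by positivity)
        exact mul_le_mul_of_nonneg_right (hW_bound w hw).2 (rpow_nonneg (le_max_right _ _) p)
    _ = 2 ^ (p + 1) * circleAverage (fun w ↦ a w ^ p) c R := by
        rw [circleAverage_fun_smul, smul_eq_mul, rpow_add_one two_ne_zero]
        ring

end

theorem integral_Ioo_neg_pi_pi_eq_circleAverage (F : ℂ → ℝ) (c : ℂ) (r : ℝ) :
    ∫ θ in Ioo (-π) π, F (circleMap c r θ) = 2 * π * circleAverage F c r := by
  have hper : Function.Periodic (fun θ ↦ F (circleMap c r θ)) (2 * π) := fun θ ↦ by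
    simp only [periodic_circleMap c r θ]
  rw [← integral_Ioc_eq_integral_Ioo, ← intervalIntegral.integral_of_le (by linarith [pi_pos]),
    circleAverage_def, smul_eq_mul, mul_inv_cancel_left₀ two_pi_pos.ne',
    ← zero_add (2 * π), ← hper.intervalIntegral_add_eq (-π) 0]
  ring_nf

theorem integral_ball_eq_integral_mul_circleAverage {F : ℂ → ℝ} {c : ℂ} {R : ℝ}
    (hF : ContinuousOn F (closedBall c R)) :
    ∫ w in ball c R, F w = 2 * π * ∫ r in Ioo 0 R, r * circleAverage F c r := by
  have hpolar : ∀ p : ℝ × ℝ, Complex.polarCoord.symm p + c = circleMap c p.1 p.2 := fun p ↦ by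
    simp [circleMap, Complex.exp_mul_I, add_comm]
  set S := Ioo 0 R ×ˢ Ioo (-π) π
  have hS_int : IntegrableOn (fun p : ℝ × ℝ ↦ p.1 * F (circleMap c p.1 p.2)) S := by
    have hcm : Continuous fun p : ℝ × ℝ ↦ circleMap c p.1 p.2 := by unfold circleMap; fun_prop
    refine ContinuousOn.integrableOn_compact (isCompact_Icc.prod isCompact_Icc) ?_ |>.mono_set
      (prod_mono Ioo_subset_Icc_self Ioo_subset_Icc_self)
    refine continuousOn_fst.mul (hF.comp hcm.continuousOn fun p hp ↦ ?_)
    have := circleMap_mem_sphere' c p.1 p.2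
    rw [mem_sphere] at this
    rw [mem_closedBall, this, abs_of_nonneg hp.1.1]
    exact hp.1.2
  calc ∫ w in ball c R, F w = ∫ w, (ball c R).indicator F (w + c) := by
        rw [← integral_indicator measurableSet_ball, integral_add_right_eq_self]
    _ = ∫ p in polarCoord.target, (Iio R ×ˢ univ).indicator
          (fun p : ℝ × ℝ ↦ p.1 * F (circleMap c p.1 p.2)) p := by
        rw [← Complex.integral_comp_polarCoord_symm]
        refine setIntegral_congr_fun polarCoord.open_target.measurableSet fun p hp ↦ ?_
        have := circleMap_mem_sphere' c p.1 p.2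
        rw [mem_sphere, abs_of_pos hp.1] at this
        by_cases hpR : p.1 < R
        · rw [hpolar, indicator_of_mem (by rwa [mem_ball, this]),
            indicator_of_mem (show p ∈ Iio R ×ˢ univ from ⟨hpR, mem_univ _⟩), smul_eq_mul]
        · rw [hpolar, indicator_of_notMem (by rwa [mem_ball, this]),
            indicator_of_notMem (fun h ↦ hpR h.1), smul_zero]
    _ = ∫ p in S, p.1 * F (circleMap c p.1 p.2) := by
        rw [setIntegral_indicator (measurableSet_Iio.prod MeasurableSet.univ), polarCoord_target,
          prod_inter_prod, Ioi_inter_Iio, inter_univ]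
    _ = ∫ r in Ioo 0 R, ∫ θ in Ioo (-π) π, r * F (circleMap c r θ) := by
        rw [Measure.volume_eq_prod, setIntegral_prod _ (by rwa [← Measure.volume_eq_prod])]
    _ = 2 * π * ∫ r in Ioo 0 R, r * circleAverage F c r := by
        rw [← integral_const_mul]
        refine integral_congr_ae (ae_of_all _ fun r ↦ ?_)
        simp only [integral_const_mul, integral_Ioo_neg_pi_pi_eq_circleAverage]
        ring

end Real

theorem integral_Ioo_rpow {p ε : ℝ} (hp : -1 < p) (hε : 0 ≤ ε) :
    ∫ r in Ioo 0 ε, r ^ p = ε ^ (p + 1) / (p + 1) := by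
  rw [← integral_Ioc_eq_integral_Ioo, ← intervalIntegral.integral_of_le hε,
    integral_rpow (.inl hp), zero_rpow (by linarith), sub_zero]

theorem rpow_norm_deriv_mul_rpow_le_setIntegral {F : ℂ → ℂ} {c : ℂ} {ε p : ℝ} (hp : 1 ≤ p)
    (hε : 0 < ε) (hF : DiffContOnCl ℂ F (ball c ε)) (hc : F c = 0) :
    ‖deriv F c‖ ^ p * ε ^ (p + 2) ≤
      (p + 2) * 2 ^ p / π * ∫ w in ball c ε, max (F w).re 0 ^ p := by
  set G : ℂ → ℝ := fun w ↦ max (F w).re 0 ^ p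
  have hGc : ContinuousOn G (closedBall c ε) :=
    ((Complex.continuous_re.comp_continuousOn hF.continuousOn_ball).sup
      continuousOn_const).rpow_const fun w _ ↦ .inr (zero_le_one.trans hp)
  have hint : IntegrableOn (fun r ↦ r * circleAverage G c r) (Ioo 0 ε) := by
    have hGc' : ContinuousOn G {z | ‖z - c‖ ∈ Icc 0 ε} :=
      hGc.mono fun z hz ↦ mem_closedBall_iff_norm.2 hz.2
    exact (continuousOn_id.mul (hGc'.circleAverage fun r hr ↦ hr.1)).integrableOn_Icc.mono_set
      Ioo_subset_Icc_self
  have hcircle : ∀ r ∈ Ioo 0 ε,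
      ‖deriv F c‖ ^ p * r ^ (p + 1) ≤ 2 ^ (p + 1) * (r * circleAverage G c r) := by
    rintro r ⟨hr, hrε⟩
    have hr_circle :=
      rpow_mul_norm_deriv_le_circleAverage hp hr (hF.mono (ball_subset_ball hrε.le)) hc
    rw [mul_rpow hr.le (norm_nonneg _)] at hr_circle
    rw [rpow_add_one hr.ne']
    nlinarith
  have hpow : IntegrableOn (fun r : ℝ ↦ ‖deriv F c‖ ^ p * r ^ (p + 1)) (Ioo 0 ε) :=
    (continuousOn_const.mul (continuousOn_id.rpow_const fun r _ ↦ .inr (by linarith)))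
      |>.integrableOn_Icc.mono_set Ioo_subset_Icc_self
  have hradial := setIntegral_mono_on hpow (hint.const_mul _) measurableSet_Ioo hcircle
  rw [integral_const_mul, integral_const_mul, integral_Ioo_rpow (by linarith) hε.le,
    show p + 1 + 1 = p + 2 by ring] at hradial
  rw [integral_ball_eq_integral_mul_circleAverage hGc]
  calc ‖deriv F c‖ ^ p * ε ^ (p + 2) = (p + 2) * (‖deriv F c‖ ^ p * (ε ^ (p + 2) / (p + 2))) := by
        field_simp
    _ ≤ (p + 2) * (2 ^ (p + 1) * ∫ r in Ioo 0 ε, r * circleAverage G c r) := by gcongr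
    _ = (p + 2) * 2 ^ p / π * (2 * π * ∫ r in Ioo 0 ε, r * circleAverage G c r) := by
        rw [rpow_add_one two_ne_zero]
        field_simp

theorem re_mul_add_conj_mul (u a b : ℂ) : (u * a + conj u * b).re = (u * (a + conj b)).re := by
  simp only [Complex.add_re, Complex.add_im, Complex.mul_re, Complex.conj_re, Complex.conj_im]
  ring

theorem exists_re_le_norm_sub_norm {h g : ℂ → ℂ} {U : Set ℂ} {z : ℂ}
    (hh : DifferentiableOn ℂ h U) (hg : DifferentiableOn ℂ g U) (hz : U ∈ 𝓝 z) :
    ∃ ψ : ℂ → ℂ, DifferentiableOn ℂ ψ U ∧ ψ z = 0 ∧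
      ‖deriv h z‖ - ‖deriv g z‖ ≤ ‖deriv ψ z‖ ∧
      ∀ w, (ψ w).re ≤ ‖h w + conj (g w)‖ - ‖h z + conj (g z)‖ := by
  obtain ⟨u, hu, hfz⟩ := Complex.exists_norm_eq_mul_self (h z + conj (g z))
  refine ⟨fun w ↦ u * h w + conj u * g w - (u * h z + conj u * g z),
    ((hh.const_mul u).add (hg.const_mul (conj u))).sub_const _, sub_self _, ?_, fun w ↦ ?_⟩
  · have hderiv : deriv (fun w ↦ u * h w + conj u * g w - (u * h z + conj u * g z)) z =
        u * deriv h z + conj u * deriv g z :=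
      ((((hh.differentiableAt hz).hasDerivAt.const_mul u).add
        ((hg.differentiableAt hz).hasDerivAt.const_mul (conj u))).sub_const _).deriv
    have htri := norm_sub_norm_le (u * deriv h z) (-(conj u * deriv g z))
    rwa [sub_neg_eq_add, norm_neg, norm_mul, norm_mul, Complex.norm_conj, hu, one_mul, one_mul,
      ← hderiv] at htri
  · have hle := Complex.re_le_norm (u * (h w + conj (g w)))
    rw [norm_mul, hu, one_mul] at hle
    have hz_re := congrArg Complex.re hfz
    rw [Complex.ofReal_re] at hz_re
    simp only [Complex.sub_re, re_mul_add_conj_mul]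
    linarith

theorem add_le_mul_sub_of_sq_le {a b K : ℝ} (hb : 0 ≤ b) (hba : b < a)
    (h : (a + b) ^ 2 ≤ K * (a ^ 2 - b ^ 2)) : a + b ≤ K * (a - b) := by
  have hab : 0 < a + b := by linarith
  nlinarith

theorem add_two_mul_two_rpow_le_four_rpow {p : ℝ} (hp : 1 ≤ p) :
    (p + 2) * 2 ^ p ≤ (4 : ℝ) ^ (p + 1) := by
  have hB := one_add_mul_self_le_rpow_one_add (s := 1) (by norm_num) hp
  rw [show (4 : ℝ) = 2 ^ (2 : ℝ) by norm_num, ← rpow_mul zero_le_two,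
    show 2 * (p + 1) = p + p + 2 by ring, rpow_add two_pos, rpow_add two_pos]
  norm_num at hB ⊢
  nlinarith

theorem stmt8 (p K : ℝ) (hp : 1 ≤ p) (hK : 1 ≤ K) (h g : ℂ → ℂ)
    (hh : DifferentiableOn ℂ h (ball (0:ℂ) 1))
    (hg : DifferentiableOn ℂ g (ball (0:ℂ) 1))
    (hJ : ∀ z ∈ ball (0:ℂ) 1, ‖deriv g z‖ < ‖deriv h z‖)
    (hqr : ∀ z ∈ ball (0:ℂ) 1,
      (‖deriv h z‖ + ‖deriv g z‖) ^ 2 ≤ K * (‖deriv h z‖ ^ 2 - ‖deriv g z‖ ^ 2))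
    (z : ℂ) (hz : z ∈ ball (0:ℂ) 1) (ε : ℝ) (hε : 0 < ε) (hε1 : ε < 1 - ‖z‖) :
    (‖deriv h z‖ + ‖deriv g z‖) ^ p ≤
      ((4:ℝ) ^ (p + 1) * K ^ p / ε ^ (p + 2)) *
        ((1 / π) * ∫ w in ball z ε,
          (max (‖h w + conj (g w)‖ - ‖h z + conj (g z)‖) 0) ^ p ∂volume) := by
  have hsub : closedBall z ε ⊆ ball 0 1 := fun w hw ↦ by
    rw [mem_ball_zero_iff]
    linarith [norm_le_norm_add_norm_sub' w z, mem_closedBall_iff_norm.1 hw]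
  obtain ⟨ψ, hψ, hψz, hψ', hre⟩ := exists_re_le_norm_sub_norm hh hg (isOpen_ball.mem_nhds hz)
  have hM : ‖deriv h z‖ + ‖deriv g z‖ ≤ K * ‖deriv ψ z‖ :=
    (add_le_mul_sub_of_sq_le (norm_nonneg _) (hJ z hz) (hqr z hz)).trans (by gcongr)
  set I := ∫ w in ball z ε, max (‖h w + conj (g w)‖ - ‖h z + conj (g z)‖) 0 ^ p
  have hmono : ∫ w in ball z ε, max (ψ w).re 0 ^ p ≤ I := by
    refine integral_max_rpow_mono (by linarith) ?_ hre
    refine ContinuousOn.integrableOn_compact (isCompact_closedBall z ε) ?_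
      |>.mono_set ball_subset_closedBall
    exact ((((hh.continuousOn.add (Complex.continuous_conj.comp_continuousOn hg.continuousOn)).mono
      hsub).norm.sub continuousOn_const).sup continuousOn_const).rpow_const
      fun w _ ↦ .inr (zero_le_one.trans hp)
  have harea : ‖deriv ψ z‖ ^ p * ε ^ (p + 2) ≤ (p + 2) * 2 ^ p * (1 / π * I) := by
    refine (rpow_norm_deriv_mul_rpow_le_setIntegral hp hε (hψ.diffContOnCl_ball hsub) hψz).trans ?_
    rw [div_mul_eq_mul_div, mul_div_assoc, one_div_mul_eq_div]
    gcongr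
  calc (‖deriv h z‖ + ‖deriv g z‖) ^ p ≤ K ^ p * ‖deriv ψ z‖ ^ p := by
        rw [← mul_rpow (by positivity) (norm_nonneg _)]
        gcongr
    _ ≤ K ^ p * ((p + 2) * 2 ^ p * (1 / π * I) / ε ^ (p + 2)) := by
        gcongr
        rwa [le_div_iff₀ (by positivity)]
    _ ≤ K ^ p * ((4 : ℝ) ^ (p + 1) * (1 / π * I) / ε ^ (p + 2)) := by
        gcongr
        exact add_two_mul_two_rpow_le_four_rpow hp
    _ = (4 : ℝ) ^ (p + 1) * K ^ p / ε ^ (p + 2) * (1 / π * I) := by ring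
end

section
/- Let ω be a majorant such that the Poisson extension P[φ] of every φ ∈ Λ_{ω,∞}(𝕋) belongs to Λ_{ω,∞}(closure of 𝔻). Then there is M > 0 such that for all δ ∈ (0, π], δ·∫_δ^π ω(t)/t² dt ≤ M·ω(δ). -/
open Metric Real

def IsMajorant (ω : ℝ → ℝ) : Prop :=
  ContinuousOn ω (Set.Ici 0) ∧ MonotoneOn ω (Set.Ici 0) ∧ ω 0 = 0 ∧
  ∀ s t : ℝ, 0 < s → s ≤ t → ω t / t ≤ ω s / s

/-- The Poisson extension of a boundary function `φ` to the closed unit disk: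
the Poisson integral inside the open disk and `φ` itself on the boundary. -/
noncomputable def poissonExt (φ : ℂ → ℝ) (z : ℂ) : ℝ :=
  if ‖z‖ < 1 then
    (1 / (2 * π)) *
      ∫ τ in (0:ℝ)..(2 * π),
        φ (Complex.exp (τ * Complex.I)) *
          ((1 - ‖z‖ ^ 2) / ‖Complex.exp (τ * Complex.I) - z‖ ^ 2)
  else φ z

/-! Test the hypothesis on `φ(e^{iτ}) = ω(|τ|)`, which lies in `Λ_ω(𝕋)` because the angle between
two unit vectors is at most `π/2` times their distance. With `C` the constant the hypothesis then
provides and `r = 1 - δ/4`, `φ(1) = 0` gives `P[φ](r) ≤ C ω(δ/4)`. On the other hand, for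
`δ ≤ τ ≤ π` the Poisson kernel at `r` is at least `δ / (16 τ²)`, so that
`2π P[φ](r) ≥ (δ/16) ∫_δ^π ω(t)/t² dt`. -/

open InnerProductGeometry

namespace IsMajorant

variable {ω : ℝ → ℝ}

theorem nonneg (hω : IsMajorant ω) {t : ℝ} (ht : 0 ≤ t) : 0 ≤ ω t :=
  hω.2.2.1 ▸ hω.2.1 Set.self_mem_Ici ht ht

theorem mono (hω : IsMajorant ω) {s t : ℝ} (hs : 0 ≤ s) (hst : s ≤ t) : ω s ≤ ω t :=
  hω.2.1 hs (hs.trans hst) hst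

theorem apply_mul_le (hω : IsMajorant ω) {c t : ℝ} (hc : 1 ≤ c) (ht : 0 ≤ t) :
    ω (c * t) ≤ c * ω t := by
  rcases ht.eq_or_lt with rfl | ht
  · simp [hω.2.2.1]
  have hct : 0 < c * t := by positivity
  have h := hω.2.2.2 t (c * t) ht (le_mul_of_one_le_left ht.le hc)
  rw [div_le_div_iff₀ hct ht] at h
  nlinarith

theorem apply_add_le (hω : IsMajorant ω) {s t : ℝ} (hs : 0 ≤ s) (ht : 0 ≤ t) :
    ω (s + t) ≤ ω s + ω t := by
  rcases hs.eq_or_lt with rfl | hs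
  · simp [hω.2.2.1]
  rcases ht.eq_or_lt with rfl | ht
  · simp [hω.2.2.1]
  have hst : 0 < s + t := by positivity
  have h₁ := hω.2.2.2 s (s + t) hs (by linarith)
  have h₂ := hω.2.2.2 t (s + t) ht (by linarith)
  rw [div_le_div_iff₀ hst hs] at h₁
  rw [div_le_div_iff₀ hst ht] at h₂
  nlinarith

theorem abs_apply_sub_apply_le (hω : IsMajorant ω) {s t : ℝ} (hs : 0 ≤ s) (ht : 0 ≤ t) :
    |ω s - ω t| ≤ ω |s - t| := by
  wlog hts : t ≤ s generalizing s t
  · rw [abs_sub_comm, abs_sub_comm s]; exact this ht hs (le_of_not_ge hts)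
  have hsub : ω s ≤ ω t + ω (s - t) := by
    simpa using hω.apply_add_le ht (sub_nonneg.2 hts)
  rw [abs_of_nonneg (sub_nonneg.2 hts), abs_of_nonneg (sub_nonneg.2 (hω.mono ht hts))]
  linarith

end IsMajorant

theorem angle_le_pi_div_two_mul_norm_sub {V : Type*} [NormedAddCommGroup V]
    [InnerProductSpace ℝ V] {x y : V} (hx : ‖x‖ = 1) (hy : ‖y‖ = 1) :
    angle x y ≤ π / 2 * ‖x - y‖ := by
  set θ := angle x y with hθ_def
  have hθ : 0 ≤ θ / 2 := by linarith [angle_nonneg x y]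
  have hchord : ‖x - y‖ = 2 * sin (θ / 2) := by
    have h : ‖x - y‖ * ‖x - y‖ = 2 - 2 * cos (2 * (θ / 2)) := by
      rw [norm_sub_sq_eq_norm_sq_add_norm_sq_sub_two_mul_norm_mul_norm_mul_cos_angle, hx, hy,
        ← hθ_def]
      ring_nf
    rw [cos_two_mul, cos_sq'] at h
    have hsin : 0 ≤ sin (θ / 2) :=
      sin_nonneg_of_nonneg_of_le_pi hθ (by linarith [angle_le_pi x y])
    nlinarith [norm_nonneg (x - y)]
  have hjordan : 2 / π * (θ / 2) ≤ sin (θ / 2) := mul_le_sin hθ (by linarith [angle_le_pi x y])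
  rw [hchord]
  have := pi_pos
  field_simp at hjordan ⊢
  linarith

theorem abs_angle_sub_angle_le {V : Type*} [NormedAddCommGroup V] [InnerProductSpace ℝ V]
    (x y z : V) : |angle x z - angle y z| ≤ angle x y := by
  rw [abs_sub_le_iff]
  constructor
  · linarith [angle_le_angle_add_angle x y z]
  · linarith [angle_le_angle_add_angle y x z, angle_comm x y]

theorem angle_exp_mul_I_one (τ : ℝ) :
    angle (Complex.exp (τ * Complex.I)) 1 = arccos (cos τ) := by
  simp [angle, Complex.inner, Complex.exp_ofReal_mul_I_re]

/-- The test function `e^{iτ} ↦ ω(|τ|)`, `|τ| ≤ π`: the unoriented angle from `1` to `e^{iτ}` is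
`|τ|`. -/
noncomputable def angleMajorant (ω : ℝ → ℝ) (ξ : ℂ) : ℝ := ω (angle ξ 1)

theorem angleMajorant_exp {ω : ℝ → ℝ} {τ : ℝ} (h₀ : 0 ≤ τ) (hπ : τ ≤ π) :
    angleMajorant ω (Complex.exp (τ * Complex.I)) = ω τ := by
  rw [angleMajorant, angle_exp_mul_I_one, arccos_cos h₀ hπ]

theorem poissonKernel_zero_exp (z : ℂ) (τ : ℝ) :
    poissonKernel 0 z (Complex.exp (τ * Complex.I)) =
      (1 - ‖z‖ ^ 2) / ‖Complex.exp (τ * Complex.I) - z‖ ^ 2 := by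
  simp [poissonKernel, Complex.norm_exp_ofReal_mul_I]

theorem poissonExt_of_norm_lt_one (φ : ℂ → ℝ) {z : ℂ} (hz : ‖z‖ < 1) :
    poissonExt φ z =
      1 / (2 * π) * ∫ τ in (0:ℝ)..2 * π,
        φ (Complex.exp (τ * Complex.I)) * poissonKernel 0 z (Complex.exp (τ * Complex.I)) :=
  (if_pos hz).trans (by simp only [poissonKernel_zero_exp])

theorem poissonExt_of_norm_eq_one (φ : ℂ → ℝ) {z : ℂ} (hz : ‖z‖ = 1) : poissonExt φ z = φ z :=
  if_neg hz.not_lt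

theorem continuous_poissonKernel_zero_exp {z : ℂ} (hz : ‖z‖ < 1) :
    Continuous fun τ : ℝ ↦ poissonKernel 0 z (Complex.exp (τ * Complex.I)) := by
  simp only [poissonKernel_zero_exp]
  refine continuous_const.div (by fun_prop) fun τ ↦ pow_ne_zero 2 ?_
  refine norm_ne_zero_iff.2 (sub_ne_zero.2 fun h ↦ ?_)
  simp [← h] at hz

theorem poissonKernel_zero_exp_nonneg {z : ℂ} (hz : ‖z‖ < 1) (τ : ℝ) :
    0 ≤ poissonKernel 0 z (Complex.exp (τ * Complex.I)) :=
  poissonKernel_zero_exp z τ ▸ div_nonneg (by nlinarith [norm_nonneg z]) (sq_nonneg _)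

theorem div_le_poissonKernel {s τ : ℝ} (hs₀ : 0 < s) (hs₁ : s ≤ 1) (hsτ : s ≤ τ) :
    s / (4 * τ ^ 2) ≤ poissonKernel 0 ((1 - s : ℝ) : ℂ) (Complex.exp (τ * Complex.I)) := by
  have hr : ‖((1 - s : ℝ) : ℂ)‖ = 1 - s := by
    rw [Complex.norm_real, Real.norm_of_nonneg (by linarith)]
  have hchord : ‖Complex.exp (τ * Complex.I) - 1‖ ≤ τ := by
    simpa [mul_comm, abs_of_pos (hs₀.trans_le hsτ)] using
      Real.norm_exp_I_mul_ofReal_sub_one_le (x := τ)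
  have hlow : s ≤ ‖Complex.exp (τ * Complex.I) - ((1 - s : ℝ) : ℂ)‖ := by
    have := norm_sub_norm_le (Complex.exp (τ * Complex.I)) ((1 - s : ℝ) : ℂ)
    rw [Complex.norm_exp_ofReal_mul_I, hr] at this
    linarith
  have hup : ‖Complex.exp (τ * Complex.I) - ((1 - s : ℝ) : ℂ)‖ ≤ 2 * τ := by
    have := norm_sub_le_norm_sub_add_norm_sub (Complex.exp (τ * Complex.I)) 1 ((1 - s : ℝ) : ℂ)
    have h1 : ‖(1 : ℂ) - ((1 - s : ℝ) : ℂ)‖ = s := by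
      rw [show (1 : ℂ) - ((1 - s : ℝ) : ℂ) = (s : ℂ) by push_cast; ring, Complex.norm_real,
        Real.norm_of_nonneg hs₀.le]
    linarith
  rw [poissonKernel_zero_exp, hr]
  apply div_le_div₀ (by nlinarith) (by nlinarith) (by nlinarith)
  nlinarith

theorem integral_le_two_pi_mul_poissonExt {φ : ℂ → ℝ} {z : ℂ} (hz : ‖z‖ < 1)
    (hφc : Continuous fun τ : ℝ => φ (Complex.exp (τ * Complex.I)))
    (hφ₀ : ∀ τ : ℝ, 0 ≤ φ (Complex.exp (τ * Complex.I))) {a b : ℝ} (ha : 0 ≤ a) (hab : a ≤ b)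
    (hb : b ≤ 2 * π) :
    ∫ τ in a..b,
        φ (Complex.exp (τ * Complex.I)) * poissonKernel 0 z (Complex.exp (τ * Complex.I)) ≤
      2 * π * poissonExt φ z := by
  rw [poissonExt_of_norm_lt_one φ hz, ← mul_assoc, mul_one_div_cancel (by positivity), one_mul]
  exact intervalIntegral.integral_mono_interval ha hab hb
    (.of_forall fun τ ↦ mul_nonneg (hφ₀ τ) (poissonKernel_zero_exp_nonneg hz τ))
    ((hφc.mul (continuous_poissonKernel_zero_exp hz)).intervalIntegrable _ _)

namespace IsMajorant

variable {ω : ℝ → ℝ}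

theorem abs_angleMajorant_sub_le (hω : IsMajorant ω) {ξ₁ ξ₂ : ℂ} (h₁ : ‖ξ₁‖ = 1)
    (h₂ : ‖ξ₂‖ = 1) :
    |angleMajorant ω ξ₁ - angleMajorant ω ξ₂| ≤ π / 2 * ω ‖ξ₁ - ξ₂‖ :=
  calc |angleMajorant ω ξ₁ - angleMajorant ω ξ₂|
      ≤ ω |angle ξ₁ 1 - angle ξ₂ 1| :=
        hω.abs_apply_sub_apply_le (angle_nonneg _ _) (angle_nonneg _ _)
    _ ≤ ω (π / 2 * ‖ξ₁ - ξ₂‖) :=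
        hω.mono (abs_nonneg _)
          ((abs_angle_sub_angle_le _ _ _).trans (angle_le_pi_div_two_mul_norm_sub h₁ h₂))
    _ ≤ π / 2 * ω ‖ξ₁ - ξ₂‖ := hω.apply_mul_le (by linarith [pi_gt_three]) (norm_nonneg _)

theorem continuous_angleMajorant_exp (hω : IsMajorant ω) :
    Continuous fun τ : ℝ => angleMajorant ω (Complex.exp (τ * Complex.I)) := by
  simp only [angleMajorant, angle_exp_mul_I_one]
  exact hω.1.comp_continuous (by fun_prop) fun τ ↦ arccos_nonneg _

theorem integral_le_poissonExt_angleMajorant (hω : IsMajorant ω) {δ : ℝ} (hδ : 0 < δ)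
    (hδπ : δ ≤ π) :
    δ / 16 * ∫ t in δ..π, ω t / t ^ 2 ≤
      2 * π * poissonExt (angleMajorant ω) ((1 - δ / 4 : ℝ) : ℂ) := by
  set z : ℂ := ((1 - δ / 4 : ℝ) : ℂ)
  have hz : ‖z‖ < 1 := by
    rw [Complex.norm_real, Real.norm_of_nonneg (by linarith [pi_lt_four])]
    linarith
  have hint : IntervalIntegrable (fun t ↦ ω t / t ^ 2) MeasureTheory.volume δ π := by
    refine ContinuousOn.intervalIntegrable ?_
    rw [Set.uIcc_of_le hδπ]
    exact (hω.1.mono fun t ht ↦ hδ.le.trans ht.1).div (continuousOn_pow 2)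
      fun t ht ↦ (pow_pos (hδ.trans_le ht.1) 2).ne'
  rw [← intervalIntegral.integral_const_mul]
  refine (intervalIntegral.integral_mono_on hδπ (hint.const_mul _) ?_ fun τ hτ ↦ ?_).trans
    (integral_le_two_pi_mul_poissonExt hz hω.continuous_angleMajorant_exp
      (fun τ ↦ hω.nonneg (angle_nonneg _ _)) hδ.le hδπ (by linarith [pi_pos]))
  · exact (hω.continuous_angleMajorant_exp.mul
      (continuous_poissonKernel_zero_exp hz)).intervalIntegrable _ _
  · have hτ₀ : 0 < τ := hδ.trans_le hτ.1
    rw [angleMajorant_exp hτ₀.le hτ.2]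
    calc δ / 16 * (ω τ / τ ^ 2) = ω τ * (δ / 4 / (4 * τ ^ 2)) := by field_simp; ring
      _ ≤ _ := mul_le_mul_of_nonneg_left
          (div_le_poissonKernel (by positivity) (by linarith [pi_lt_four]) (by linarith [hτ.1]))
          (hω.nonneg hτ₀.le)

theorem mul_integral_le_of_abs_poissonExt_sub_le (hω : IsMajorant ω) {C δ : ℝ} (hC₀ : 0 ≤ C)
    (hδ : 0 < δ) (hδπ : δ ≤ π)
    (hC : |poissonExt (angleMajorant ω) ((1 - δ / 4 : ℝ) : ℂ) - poissonExt (angleMajorant ω) 1| ≤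
      C * ω ‖((1 - δ / 4 : ℝ) : ℂ) - 1‖) :
    δ * ∫ t in δ..π, ω t / t ^ 2 ≤ 32 * π * C * ω δ := by
  have hP₁ : poissonExt (angleMajorant ω) 1 = 0 := by
    rw [poissonExt_of_norm_eq_one _ norm_one, angleMajorant, angle_self one_ne_zero, hω.2.2.1]
  have hdist : ‖((1 - δ / 4 : ℝ) : ℂ) - 1‖ = δ / 4 := by
    rw [show ((1 - δ / 4 : ℝ) : ℂ) - 1 = ((-(δ / 4) : ℝ) : ℂ) by push_cast; ring,
      Complex.norm_real, norm_neg, Real.norm_of_nonneg (by positivity)]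
  have hP : poissonExt (angleMajorant ω) ((1 - δ / 4 : ℝ) : ℂ) ≤ C * ω δ := by
    rw [hP₁, sub_zero, hdist] at hC
    exact (le_abs_self _).trans (hC.trans (mul_le_mul_of_nonneg_left
      (hω.mono (by positivity) (by linarith)) hC₀))
  have hlower := (hω.integral_le_poissonExt_angleMajorant hδ hδπ).trans
    (mul_le_mul_of_nonneg_left hP (by positivity))
  linarith

end IsMajorant

theorem stmt12 (ω : ℝ → ℝ) (hm : IsMajorant ω)
    (hyp : ∀ φ : ℂ → ℝ,
      (∃ L > (0:ℝ), ∀ ξ₁ ∈ sphere (0:ℂ) 1, ∀ ξ₂ ∈ sphere (0:ℂ) 1,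
        |φ ξ₁ - φ ξ₂| ≤ L * ω ‖ξ₁ - ξ₂‖) →
      ∃ C > (0:ℝ), ∀ z₁ ∈ closedBall (0:ℂ) 1, ∀ z₂ ∈ closedBall (0:ℂ) 1,
        |poissonExt φ z₁ - poissonExt φ z₂| ≤ C * ω ‖z₁ - z₂‖) :
    ∃ M > (0:ℝ), ∀ δ : ℝ, 0 < δ → δ ≤ π →
      δ * ∫ t in δ..π, ω t / t ^ 2 ≤ M * ω δ := by
  obtain ⟨C, hC₀, hC⟩ := hyp (angleMajorant ω) ⟨π / 2, by positivity, fun ξ₁ h₁ ξ₂ h₂ ↦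
    hm.abs_angleMajorant_sub_le (mem_sphere_zero_iff_norm.1 h₁) (mem_sphere_zero_iff_norm.1 h₂)⟩
  refine ⟨32 * π * C, by positivity, fun δ hδ hδπ ↦ ?_⟩
  refine hm.mul_integral_le_of_abs_poissonExt_sub_le hC₀.le hδ hδπ (hC _ ?_ _ ?_)
  · rw [mem_closedBall_zero_iff, Complex.norm_real,
      Real.norm_of_nonneg (by linarith [pi_lt_four])]
    linarith
  · rw [mem_closedBall_zero_iff, norm_one]
end
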